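/- arXiv:1704.02077 — 3 statements merged into one kernel-verified Lean document; each statement's English description precedes it below -/
import Mathlib

section
/- Let L ∈ ℝ^{N×N} be symmetric positive semidefinite with L𝟙 = 0 and with one-dimensional kernel spanned by 𝟙, let λ₂ > 0 be its smallest nonzero eigenvalue, and let S ∈ ℝ^{n×n} be symmetric negative semidefinite. Then for every ξ ∈ ℝ^{Nn} satisfying (𝟙ᵀ ⊗ I_n)ξ = 0, one has ξᵀ(L ⊗ S)ξ ≤ λ₂ ξᵀ(I_N ⊗ S)ξ. -/
/-!
Factor `-S = Bᵀ B`. Then `A ⊗ (-S) = (I ⊗ B)ᵀ (A ⊗ I) (I ⊗ B)`, so with `η = (I ⊗ B) ξ` both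
sides of the inequality become sums over `k` of quadratic forms `η_kᵀ A η_k` in the block columns
`η_k = (η (i, k))ᵢ`, for `A = L` and `A = I`. The constraint on `ξ` passes to `η`, because `I ⊗ B`
commutes with `𝟙ᵀ ⊗ I`, and says that every `η_k` is orthogonal to `𝟙`, hence to `ker L`.
Expanding in an orthonormal eigenbasis of `L` then gives `λ₂ η_kᵀ η_k ≤ η_kᵀ L η_k`.
-/

open Matrix Kronecker

theorem OrthonormalBasis.sum_dotProduct_mul_dotProduct {ι : Type*} [Fintype ι]
    (b : OrthonormalBasis ι ℝ (EuclideanSpace ℝ ι)) (x y : ι → ℝ) :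
    ∑ i, (⇑(b i) ⬝ᵥ x) * (⇑(b i) ⬝ᵥ y) = x ⬝ᵥ y := by
  simpa [EuclideanSpace.inner_eq_star_dotProduct, dotProduct_comm] using
    b.sum_inner_mul_inner (WithLp.toLp 2 x) (WithLp.toLp 2 y)

namespace Matrix

variable {ι κ : Type*} [Fintype ι] [Fintype κ]

section Spectral

variable [DecidableEq ι] {A : Matrix ι ι ℝ}

theorem IsHermitian.dotProduct_mulVec_eq_sum_eigenvalues (hA : A.IsHermitian) (x : ι → ℝ) :
    x ⬝ᵥ A *ᵥ x = ∑ i, hA.eigenvalues i * (⇑(hA.eigenvectorBasis i) ⬝ᵥ x) ^ 2 := by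
  rw [← hA.eigenvectorBasis.sum_dotProduct_mul_dotProduct x (A *ᵥ x)]
  refine Finset.sum_congr rfl fun i _ => ?_
  have hsymm : ⇑(hA.eigenvectorBasis i) ⬝ᵥ A *ᵥ x =
      hA.eigenvalues i * (⇑(hA.eigenvectorBasis i) ⬝ᵥ x) := by
    rw [dotProduct_mulVec, ← mulVec_transpose, ← conjTranspose_eq_transpose_of_trivial, hA.eq,
      hA.mulVec_eigenvectorBasis, smul_dotProduct, smul_eq_mul]
  rw [hsymm]
  ring

theorem IsHermitian.mul_dotProduct_self_le_dotProduct_mulVec (hA : A.IsHermitian) {c : ℝ}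
    (hc : c ∈ lowerBounds {t : ℝ | t ≠ 0 ∧ ∃ v : ι → ℝ, v ≠ 0 ∧ A *ᵥ v = t • v})
    {x : ι → ℝ} (hx : ∀ v, A *ᵥ v = 0 → v ⬝ᵥ x = 0) :
    c * (x ⬝ᵥ x) ≤ x ⬝ᵥ A *ᵥ x := by
  rw [hA.dotProduct_mulVec_eq_sum_eigenvalues, ← hA.eigenvectorBasis.sum_dotProduct_mul_dotProduct,
    Finset.mul_sum]
  refine Finset.sum_le_sum fun i _ => ?_
  rw [← sq]
  rcases eq_or_ne (hA.eigenvalues i) 0 with h0 | h0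
  · have hker : A *ᵥ ⇑(hA.eigenvectorBasis i) = 0 := by
      rw [hA.mulVec_eigenvectorBasis, h0, zero_smul]
    simp [h0, hx _ hker]
  · have hne : ⇑(hA.eigenvectorBasis i) ≠ 0 := by
      simpa using hA.eigenvectorBasis.orthonormal.ne_zero i
    exact mul_le_mul_of_nonneg_right (hc ⟨h0, _, hne, hA.mulVec_eigenvectorBasis i⟩) (sq_nonneg _)

end Spectral

section Kronecker

theorem kronecker_neg {α l m n p : Type*} [Mul α] [HasDistribNeg α] (A : Matrix l m α)
    (B : Matrix n p α) : A ⊗ₖ (-B) = -(A ⊗ₖ B) := by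
  ext
  simp

variable {R : Type*} [CommSemiring R]

theorem kronecker_transpose_mul_self [DecidableEq ι] [DecidableEq κ] (A : Matrix ι ι R)
    (B : Matrix κ κ R) : A ⊗ₖ (Bᵀ * B) = (1 ⊗ₖ B)ᵀ * (A ⊗ₖ 1) * (1 ⊗ₖ B) := by
  rw [← kroneckerMap_transpose, transpose_one, ← mul_kronecker_mul, ← mul_kronecker_mul,
    Matrix.one_mul, Matrix.mul_one, Matrix.mul_one]

theorem kronecker_one_mul_one_kronecker {l m : Type*} [Fintype l] [Fintype m] [DecidableEq l]
    [DecidableEq m] [DecidableEq κ] (A : Matrix l m R) (B : Matrix κ κ R) :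
    (A ⊗ₖ (1 : Matrix κ κ R)) * ((1 : Matrix m m R) ⊗ₖ B) =
      ((1 : Matrix l l R) ⊗ₖ B) * (A ⊗ₖ (1 : Matrix κ κ R)) := by
  rw [← mul_kronecker_mul, ← mul_kronecker_mul, Matrix.mul_one, Matrix.one_mul, Matrix.one_mul,
    Matrix.mul_one]

theorem dotProduct_kronecker_one_mulVec [DecidableEq κ] (A : Matrix ι ι R) (η : ι × κ → R) :
    η ⬝ᵥ (A ⊗ₖ 1) *ᵥ η = ∑ k, (fun i => η (i, k)) ⬝ᵥ A *ᵥ fun i => η (i, k) := by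
  simp only [dotProduct, mulVec, kroneckerMap_apply, one_apply, Fintype.sum_prod_type, mul_ite,
    mul_one, mul_zero, ite_mul, zero_mul, Finset.sum_ite_eq, Finset.mem_univ, if_true]
  rw [Finset.sum_comm]

theorem dotProduct_kronecker_transpose_mul_self_mulVec [DecidableEq ι] [DecidableEq κ]
    (A : Matrix ι ι R) (B : Matrix κ κ R) (ξ : ι × κ → R) :
    ξ ⬝ᵥ (A ⊗ₖ (Bᵀ * B)) *ᵥ ξ =
      ∑ k, (fun i => ((1 ⊗ₖ B) *ᵥ ξ) (i, k)) ⬝ᵥ A *ᵥ fun i => ((1 ⊗ₖ B) *ᵥ ξ) (i, k) := by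
  rw [kronecker_transpose_mul_self, ← mulVec_mulVec, ← mulVec_mulVec, dotProduct_mulVec,
    vecMul_transpose, dotProduct_kronecker_one_mulVec]

theorem of_const_one_kronecker_one_mulVec_apply {o : Type*} [DecidableEq κ] (η : ι × κ → R)
    (a : o) (k : κ) :
    (((of fun (_ : o) (_ : ι) => (1 : R)) ⊗ₖ (1 : Matrix κ κ R)) *ᵥ η) (a, k) = ∑ i, η (i, k) := by
  simp [mulVec, dotProduct, Fintype.sum_prod_type, one_apply]

end Kronecker

end Matrix

theorem kron_quadratic_upper_bound_negsemidef_general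
    (N n : ℕ)
    (L : Matrix (Fin N) (Fin N) ℝ) (hLpsd : L.PosSemidef)
    (hker : ∀ x : Fin N → ℝ, L.mulVec x = 0 ↔ ∃ c : ℝ, x = fun _ => c)
    (lam2 : ℝ)
    (hlam2 : IsLeast {t : ℝ | t ≠ 0 ∧ ∃ v : Fin N → ℝ, v ≠ 0 ∧ L.mulVec v = t • v} lam2)
    (S : Matrix (Fin n) (Fin n) ℝ) (hS : (-S).PosSemidef)
    (ξ : Fin N × Fin n → ℝ)
    (hξ : (Matrix.of (fun (_ : Fin 1) (_ : Fin N) => (1:ℝ)) ⊗ₖ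
            (1 : Matrix (Fin n) (Fin n) ℝ)).mulVec ξ = 0) :
    ξ ⬝ᵥ (L ⊗ₖ S).mulVec ξ ≤ lam2 * (ξ ⬝ᵥ ((1 : Matrix (Fin N) (Fin N) ℝ) ⊗ₖ S).mulVec ξ) := by
  open scoped MatrixOrder in
  obtain ⟨B, hB⟩ := CStarAlgebra.nonneg_iff_eq_star_mul_self.mp hS.nonneg
  have hSB : S = -(Bᵀ * B) := by
    rw [star_eq_conjTranspose, conjTranspose_eq_transpose_of_trivial] at hB
    rw [← hB, neg_neg]
  set η := ((1 : Matrix (Fin N) (Fin N) ℝ) ⊗ₖ B) *ᵥ ξ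
  have hquad (A : Matrix (Fin N) (Fin N) ℝ) :
      ξ ⬝ᵥ (A ⊗ₖ S) *ᵥ ξ = -∑ k, (fun i => η (i, k)) ⬝ᵥ A *ᵥ fun i => η (i, k) := by
    rw [hSB, kronecker_neg, neg_mulVec, dotProduct_neg,
      dotProduct_kronecker_transpose_mul_self_mulVec]
  have hη (k : Fin n) (v : Fin N → ℝ) (hv : L *ᵥ v = 0) : v ⬝ᵥ (fun i => η (i, k)) = 0 := by
    obtain ⟨c, rfl⟩ := (hker v).mp hv
    have hsum : ∑ i, η (i, k) = 0 := by
      rw [← of_const_one_kronecker_one_mulVec_apply η (0 : Fin 1) k, mulVec_mulVec,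
        kronecker_one_mul_one_kronecker, ← mulVec_mulVec, hξ, mulVec_zero, Pi.zero_apply]
    simp [dotProduct, ← Finset.mul_sum, hsum]
  rw [hquad, hquad, mul_neg, neg_le_neg_iff, Finset.mul_sum]
  refine Finset.sum_le_sum fun k _ => ?_
  rw [one_mulVec]
  exact hLpsd.isHermitian.mul_dotProduct_self_le_dotProduct_mulVec hlam2.2 (hη k)

/-- If `L` is symmetric PSD with `L𝟙 = 0` and kernel exactly the span
of `𝟙`, `λ₂ > 0` is its smallest nonzero eigenvalue, and `S` is symmetric negative
semidefinite, then for every `ξ ∈ ℝ^{Nn}` with `(𝟙ᵀ ⊗ I_n)ξ = 0` one has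
`ξᵀ(L ⊗ S)ξ ≤ λ₂ ξᵀ(I_N ⊗ S)ξ`. -/
theorem kron_quadratic_upper_bound_negsemidef
    (N n : ℕ)
    (L : Matrix (Fin N) (Fin N) ℝ) (hLpsd : L.PosSemidef)
    (hL1 : L.mulVec (fun _ => 1) = 0)
    (hker : ∀ x : Fin N → ℝ, L.mulVec x = 0 ↔ ∃ c : ℝ, x = fun _ => c)
    (lam2 : ℝ) (hlam2pos : 0 < lam2)
    (hlam2 : IsLeast {t : ℝ | t ≠ 0 ∧ ∃ v : Fin N → ℝ, v ≠ 0 ∧ L.mulVec v = t • v} lam2)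
    (S : Matrix (Fin n) (Fin n) ℝ) (hS : (-S).PosSemidef)
    (ξ : Fin N × Fin n → ℝ)
    (hξ : (Matrix.of (fun (_ : Fin 1) (_ : Fin N) => (1:ℝ)) ⊗ₖ
            (1 : Matrix (Fin n) (Fin n) ℝ)).mulVec ξ = 0) :
    ξ ⬝ᵥ (L ⊗ₖ S).mulVec ξ ≤ lam2 * (ξ ⬝ᵥ ((1 : Matrix (Fin N) (Fin N) ℝ) ⊗ₖ S).mulVec ξ) :=
  kron_quadratic_upper_bound_negsemidef_general N n L hLpsd hker lam2 hlam2 S hS ξ hξ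
end

section
/- Let A ∈ ℝ^{n×n}, B ∈ ℝ^{n×p}, and let P, Q ∈ ℝ^{n×n} be symmetric positive definite matrices satisfying the algebraic Riccati equation PA + AᵀP − PBBᵀP + Q = 0. Then the matrix A − BBᵀP is Hurwitz: every (complex) eigenvalue of A − BBᵀP has strictly negative real part. -/
/-!
If `(A - B Bᵀ P) v = μ v` with `v ≠ 0`, the Riccati equation rewritten for the closed loop
`K = A - B Bᵀ P` reads `P K + Kᵀ P = -(Q + P B Bᵀ P)`. Sandwiching it between `v*` and `v`
gives `2 Re μ · v* P v = -v* (Q + P B Bᵀ P) v < 0`, and `v* P v > 0` forces `Re μ < 0`.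
-/

open Matrix

/-- A real square matrix is Hurwitz if every complex eigenvalue (root of its
characteristic polynomial over ℂ) has strictly negative real part. -/
def IsHurwitz {n : ℕ} (M : Matrix (Fin n) (Fin n) ℝ) : Prop :=
  ∀ μ : ℂ, (M.map (Complex.ofReal ·)).charpoly.IsRoot μ → μ.re < 0

open scoped ComplexOrder

namespace Matrix

variable {n : Type*} [Fintype n]

theorem exists_mulVec_eq_smul_of_isRoot_charpoly [DecidableEq n] {K : Type*} [Field K]
    {M : Matrix n n K} {μ : K} (h : M.charpoly.IsRoot μ) : ∃ v ≠ 0, M *ᵥ v = μ • v := by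
  rw [← mem_spectrum_iff_isRoot_charpoly, ← spectrum_toLin',
    ← Module.End.hasEigenvalue_iff_mem_spectrum] at h
  obtain ⟨v, hv⟩ := h.exists_hasEigenvector
  exact ⟨v, hv.2, hv.apply_eq_smul⟩

theorem re_star_dotProduct_map_ofReal_mulVec (M : Matrix n n ℝ) (v : n → ℂ) :
    (star v ⬝ᵥ M.map (↑) *ᵥ v).re =
      (fun i ↦ (v i).re) ⬝ᵥ M *ᵥ (fun i ↦ (v i).re) +
        (fun i ↦ (v i).im) ⬝ᵥ M *ᵥ (fun i ↦ (v i).im) := by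
  simp only [dotProduct, mulVec, Complex.re_sum, Finset.mul_sum, ← Finset.sum_add_distrib]
  refine Finset.sum_congr rfl fun i _ ↦ Finset.sum_congr rfl fun j _ ↦ ?_
  simp

theorem PosDef.map_ofReal {M : Matrix n n ℝ} (hM : M.PosDef) :
    (M.map (↑) : Matrix n n ℂ).PosDef := by
  have hH : (M.map (↑) : Matrix n n ℂ).IsHermitian :=
    hM.1.map _ fun x ↦ (Complex.conj_ofReal x).symm
  refine .of_dotProduct_mulVec_pos hH fun v hv ↦
    RCLike.pos_iff.mpr ⟨?_, hH.im_star_dotProduct_mulVec_self v⟩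
  change 0 < (star v ⬝ᵥ M.map (↑) *ᵥ v).re
  rw [re_star_dotProduct_map_ofReal_mulVec]
  have hx := hM.posSemidef.dotProduct_mulVec_nonneg (fun i ↦ (v i).re)
  have hy := hM.posSemidef.dotProduct_mulVec_nonneg (fun i ↦ (v i).im)
  simp only [star_trivial] at hx hy
  by_cases hre : (fun i ↦ (v i).re) = 0
  · have him : (fun i ↦ (v i).im) ≠ 0 := fun him ↦
      hv (funext fun i ↦ Complex.ext (congrFun hre i) (congrFun him i))
    simpa using add_lt_add_of_le_of_lt hx (hM.dotProduct_mulVec_pos him)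
  · simpa using add_lt_add_of_lt_of_le (hM.dotProduct_mulVec_pos hre) hy

theorem re_lt_zero_of_mulVec_eq_smul_of_posDef {𝕜 : Type*} [RCLike 𝕜] {M P : Matrix n n 𝕜}
    (hP : P.PosDef) (hL : (-(Mᴴ * P + P * M)).PosDef) {μ : 𝕜} {v : n → 𝕜} (hv : v ≠ 0)
    (hMv : M *ᵥ v = μ • v) : RCLike.re μ < 0 := by
  set c := star v ⬝ᵥ P *ᵥ v
  have hc : 0 < RCLike.re c ∧ RCLike.im c = 0 := RCLike.pos_iff.mp (hP.dotProduct_mulVec_pos hv)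
  have hquad : star v ⬝ᵥ (Mᴴ * P + P * M) *ᵥ v = star μ * c + μ * c := by
    rw [add_mulVec, dotProduct_add, ← mulVec_mulVec, ← mulVec_mulVec, hMv, mulVec_smul,
      dotProduct_smul, dotProduct_mulVec, ← star_mulVec, hMv, star_smul, smul_dotProduct,
      smul_eq_mul, smul_eq_mul]
  have hre : RCLike.re (star μ * c + μ * c) = 2 * RCLike.re μ * RCLike.re c := by
    simp only [RCLike.star_def, map_add, RCLike.mul_re, RCLike.conj_re, hc.2, mul_zero, sub_zero]
    ring
  have hneg := (RCLike.pos_iff.mp (hL.dotProduct_mulVec_pos hv)).1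
  rw [neg_mulVec, dotProduct_neg, hquad, map_neg, hre, neg_pos] at hneg
  linarith [neg_of_mul_neg_left hneg hc.1.le]

end Matrix

theorem IsHurwitz.of_lyapunov {n : ℕ} {K P : Matrix (Fin n) (Fin n) ℝ} (hP : P.PosDef)
    (hL : (-(Kᵀ * P + P * K)).PosDef) : IsHurwitz K := by
  intro μ hμ
  obtain ⟨v, hv, hKv⟩ := exists_mulVec_eq_smul_of_isRoot_charpoly hμ
  refine re_lt_zero_of_mulVec_eq_smul_of_posDef hP.map_ofReal ?_ hv hKv
  have hmap : (-(Kᵀ * P + P * K)).map Complex.ofReal =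
      -((K.map Complex.ofReal)ᴴ * P.map Complex.ofReal +
        P.map Complex.ofReal * K.map Complex.ofReal) := by
    rw [← conjTranspose_map _ fun x ↦ (Complex.conj_ofReal x).symm,
      conjTranspose_eq_transpose_of_trivial]
    change Complex.ofRealHom.mapMatrix _ =
      -(Complex.ofRealHom.mapMatrix Kᵀ * Complex.ofRealHom.mapMatrix P +
        Complex.ofRealHom.mapMatrix P * Complex.ofRealHom.mapMatrix K)
    simp only [map_neg, map_add, map_mul]
  exact hmap ▸ hL.map_ofReal

/-- If `P, Q` are symmetric positive definite and satisfy the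
algebraic Riccati equation `PA + AᵀP − PBBᵀP + Q = 0`, then `A − BBᵀP` is Hurwitz. -/
theorem riccati_implies_hurwitz
    (n p : ℕ)
    (A : Matrix (Fin n) (Fin n) ℝ) (B : Matrix (Fin n) (Fin p) ℝ)
    (P Q : Matrix (Fin n) (Fin n) ℝ)
    (hP : P.PosDef) (hQ : Q.PosDef)
    (hARE : P * A + Aᵀ * P - P * B * Bᵀ * P + Q = 0) :
    IsHurwitz (A - B * Bᵀ * P) := by
  refine .of_lyapunov hP ?_
  have hPt : Pᵀ = P := isHermitian_iff_isSymm.mp hP.1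
  have hclosed :
      -((A - B * Bᵀ * P)ᵀ * P + P * (A - B * Bᵀ * P)) = Q + P * (B * Bᵀ) * P := by
    rw [← sub_eq_zero, ← neg_eq_zero, ← hARE, Matrix.mul_assoc P B Bᵀ]
    simp only [transpose_sub, transpose_mul, transpose_transpose, hPt]
    -- `B` is not square: `noncomm_ring` must see `B * Bᵀ` as one `n × n` matrix
    generalize B * Bᵀ = G
    noncomm_ring
  rw [hclosed]
  exact hQ.add_posSemidef (by simpa [hPt] using
    (posSemidef_self_mul_conjTranspose B).conjTranspose_mul_mul_same P)
end

section
/- Under the stated assumptions (Lipschitz-type nonlinearity), let P₂, Q₂ be symmetric positive definite with P₂A + AᵀP₂ − P₂BBᵀP₂ + Q₂ = 0, K₂ = −BᵀP₂, μ ≥ γ, ν > 0. Let xᵢ, rᵢ, pᵢ : [0,∞) → ℝⁿ be such that the tracking error x̃ᵢ = xᵢ − pᵢ satisfies the closed-loop error dynamics ẋ̃ᵢ = (A + BK₂)x̃ᵢ + B( f(xᵢ,t) − f(rᵢ,t) ) + μ φᵢ B h(K₂x̃ᵢ), where φᵢ = ‖xᵢ − rᵢ‖ + ν. Then V(t) =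 x̃ᵢ(t)ᵀP₂x̃ᵢ(t) satisfies V(t) ≤ V(0) e^{−η₂ t} with η₂ = λ_min(Q₂)/λ_max(P₂); in particular x̃ᵢ(t) → 0 exponentially as t → ∞. -/
/-!
With `w = K₂x̃ = -BᵀP₂x̃` and `Δ = f(x,t) - f(r,t)`, the Riccati equation turns the derivative of
`V = x̃ᵀP₂x̃` along the error dynamics into `V̇ = -x̃ᵀQ₂x̃ - ‖w‖² - 2⟪w, Δ⟫ - 2μφ‖w‖`. The Lipschitz
bound gives `‖Δ‖ ≤ γ‖x - r‖ ≤ μφ`, so `V̇ ≤ -x̃ᵀQ₂x̃ ≤ -λ_min(Q₂)‖x̃‖² ≤ -η₂V`, and Grönwall's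
inequality gives the decay of `V`. Since `P₂` is positive definite, `V` dominates a multiple of
`‖x̃‖²`, whence the exponential decay of `x̃`.
-/

open Matrix

noncomputable def mv {m k : ℕ} (M : Matrix (Fin m) (Fin k) ℝ)
    (v : EuclideanSpace ℝ (Fin k)) : EuclideanSpace ℝ (Fin m) := WithLp.toLp 2 (M.mulVec v)

/-- The normalization function `h(z) = z/‖z‖` for `z ≠ 0`, `h(0) = 0`
(note `(0:ℝ)⁻¹ = 0` in Lean, so this single formula covers both cases). -/
noncomputable def sgn {q : ℕ} (z : EuclideanSpace ℝ (Fin q)) : EuclideanSpace ℝ (Fin q) :=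
  ‖z‖⁻¹ • z

open scoped RealInnerProductSpace

section EuclideanMatrix

variable {m k l : ℕ}

lemma mv_add (M N : Matrix (Fin m) (Fin k) ℝ) (v : EuclideanSpace ℝ (Fin k)) :
    mv (M + N) v = mv M v + mv N v := by
  simp only [mv, add_mulVec, WithLp.toLp_add]

lemma mv_mul (M : Matrix (Fin m) (Fin k) ℝ) (N : Matrix (Fin k) (Fin l) ℝ)
    (v : EuclideanSpace ℝ (Fin l)) : mv (M * N) v = mv M (mv N v) := by
  simp only [mv, mulVec_mulVec]

lemma mv_sub (M N : Matrix (Fin m) (Fin k) ℝ) (v : EuclideanSpace ℝ (Fin k)) :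
    mv (M - N) v = mv M v - mv N v := by
  simp only [mv, sub_mulVec, WithLp.toLp_sub]

lemma mv_neg (M : Matrix (Fin m) (Fin k) ℝ) (v : EuclideanSpace ℝ (Fin k)) :
    mv (-M) v = -mv M v := by
  simp only [mv, neg_mulVec, WithLp.toLp_neg]

lemma inner_mv_eq_dotProduct (M : Matrix (Fin m) (Fin k) ℝ) (u : EuclideanSpace ℝ (Fin m))
    (v : EuclideanSpace ℝ (Fin k)) : ⟪u, mv M v⟫ = u.ofLp ⬝ᵥ M *ᵥ v.ofLp := by
  rw [EuclideanSpace.inner_eq_star_dotProduct, star_trivial, dotProduct_comm]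
  rfl

lemma inner_mv_left (M : Matrix (Fin m) (Fin k) ℝ) (u : EuclideanSpace ℝ (Fin k))
    (v : EuclideanSpace ℝ (Fin m)) : ⟪mv M u, v⟫ = ⟪u, mv Mᵀ v⟫ := by
  rw [real_inner_comm, inner_mv_eq_dotProduct, inner_mv_eq_dotProduct, dotProduct_mulVec,
    mulVec_transpose, dotProduct_comm]

lemma inner_self_sgn (z : EuclideanSpace ℝ (Fin k)) : ⟪z, sgn z⟫ = ‖z‖ := by
  rcases eq_or_ne z 0 with rfl | hz
  · simp [sgn]
  · rw [sgn, real_inner_smul_right, real_inner_self_eq_norm_sq]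
    field_simp [norm_ne_zero_iff.mpr hz]

end EuclideanMatrix

section Rayleigh

variable {ι : Type*} [Fintype ι]

def eigenvalueSet (M : Matrix ι ι ℝ) : Set ℝ := {t | ∃ v : ι → ℝ, v ≠ 0 ∧ M *ᵥ v = t • v}

lemma Matrix.PosDef.pos_of_mem_eigenvalueSet {M : Matrix ι ι ℝ} (hM : M.PosDef) {t : ℝ}
    (ht : t ∈ eigenvalueSet M) : 0 < t := by
  obtain ⟨v, hv, hMv⟩ := ht
  have hpos := hM.dotProduct_mulVec_pos hv
  rw [star_trivial, hMv, dotProduct_smul, smul_eq_mul] at hpos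
  exact pos_of_mul_pos_left hpos (by simpa using dotProduct_self_star_nonneg v)

variable [DecidableEq ι] {M : Matrix ι ι ℝ}

lemma Matrix.IsHermitian.eigenvalues_mem_eigenvalueSet (hM : M.IsHermitian) (i : ι) :
    hM.eigenvalues i ∈ eigenvalueSet M :=
  ⟨hM.eigenvectorBasis i, fun h => hM.eigenvectorBasis.orthonormal.ne_zero i
    (by simpa using congrArg (WithLp.toLp 2) h), hM.mulVec_eigenvectorBasis i⟩

lemma Matrix.IsHermitian.dotProduct_mulVec_eq_sum (hM : M.IsHermitian)
    (v : EuclideanSpace ℝ ι) :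
    v.ofLp ⬝ᵥ M *ᵥ v.ofLp = ∑ i, hM.eigenvalues i * ⟪hM.eigenvectorBasis i, v⟫ ^ 2 := by
  set b := hM.eigenvectorBasis
  have hb : ∀ i, ⟪b i, M.toEuclideanLin v⟫ = hM.eigenvalues i * ⟪b i, v⟫ := fun i => by
    rw [← isSymmetric_toEuclideanLin_iff.mpr hM, toLpLin_apply,
      hM.mulVec_eigenvectorBasis, WithLp.toLp_smul, WithLp.toLp_ofLp, real_inner_smul_left]
  calc v.ofLp ⬝ᵥ M *ᵥ v.ofLp = ⟪v, M.toEuclideanLin v⟫ := by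
        rw [EuclideanSpace.inner_eq_star_dotProduct, star_trivial, dotProduct_comm]; rfl
    _ = ∑ i, hM.eigenvalues i * ⟪b i, v⟫ ^ 2 := by
        rw [← b.sum_inner_mul_inner]
        refine Finset.sum_congr rfl fun i _ => ?_
        rw [hb, real_inner_comm]; ring

lemma Matrix.IsHermitian.mul_norm_sq_le_dotProduct_mulVec (hM : M.IsHermitian) {c : ℝ}
    (hc : ∀ i, c ≤ hM.eigenvalues i) (v : EuclideanSpace ℝ ι) :
    c * ‖v‖ ^ 2 ≤ v.ofLp ⬝ᵥ M *ᵥ v.ofLp := by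
  rw [hM.dotProduct_mulVec_eq_sum, ← hM.eigenvectorBasis.sum_sq_inner_right, Finset.mul_sum]
  exact Finset.sum_le_sum fun i _ => mul_le_mul_of_nonneg_right (hc i) (sq_nonneg _)

lemma Matrix.IsHermitian.dotProduct_mulVec_le_mul_norm_sq (hM : M.IsHermitian) {c : ℝ}
    (hc : ∀ i, hM.eigenvalues i ≤ c) (v : EuclideanSpace ℝ ι) :
    v.ofLp ⬝ᵥ M *ᵥ v.ofLp ≤ c * ‖v‖ ^ 2 := by
  rw [hM.dotProduct_mulVec_eq_sum, ← hM.eigenvectorBasis.sum_sq_inner_right, Finset.mul_sum]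
  exact Finset.sum_le_sum fun i _ => mul_le_mul_of_nonneg_right (hc i) (sq_nonneg _)

lemma Matrix.PosDef.exists_pos_mul_norm_sq_le (hM : M.PosDef) :
    ∃ c > 0, ∀ v : EuclideanSpace ℝ ι, c * ‖v‖ ^ 2 ≤ v.ofLp ⬝ᵥ M *ᵥ v.ofLp := by
  cases isEmpty_or_nonempty ι
  · exact ⟨1, one_pos, fun v => by simp [Subsingleton.elim v 0]⟩
  · obtain ⟨i, hi⟩ := Finite.exists_min hM.1.eigenvalues
    exact ⟨_, hM.eigenvalues_pos i, hM.1.mul_norm_sq_le_dotProduct_mulVec hi⟩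

lemma div_mul_dotProduct_mulVec_le {P Q : Matrix ι ι ℝ} (hP : P.PosDef) (hQ : Q.PosDef)
    {lminQ lmaxP : ℝ} (hlminQ : IsLeast (eigenvalueSet Q) lminQ)
    (hlmaxP : IsGreatest (eigenvalueSet P) lmaxP) (v : EuclideanSpace ℝ ι) :
    lminQ / lmaxP * (v.ofLp ⬝ᵥ P *ᵥ v.ofLp) ≤ v.ofLp ⬝ᵥ Q *ᵥ v.ofLp := by
  have hlmaxP_pos := hP.pos_of_mem_eigenvalueSet hlmaxP.1
  calc lminQ / lmaxP * (v.ofLp ⬝ᵥ P *ᵥ v.ofLp) ≤ lminQ / lmaxP * (lmaxP * ‖v‖ ^ 2) := by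
        gcongr
        · exact (div_pos (hQ.pos_of_mem_eigenvalueSet hlminQ.1) hlmaxP_pos).le
        · exact hP.1.dotProduct_mulVec_le_mul_norm_sq
            (fun i => hlmaxP.2 (hP.1.eigenvalues_mem_eigenvalueSet i)) v
    _ = lminQ * ‖v‖ ^ 2 := by field_simp
    _ ≤ v.ofLp ⬝ᵥ Q *ᵥ v.ofLp := hQ.1.mul_norm_sq_le_dotProduct_mulVec
          (fun i => hlminQ.2 (hQ.1.eigenvalues_mem_eigenvalueSet i)) v

end Rayleigh

section Riccati

variable {n p : ℕ} {A P Q : Matrix (Fin n) (Fin n) ℝ} {B : Matrix (Fin n) (Fin p) ℝ}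

lemma two_inner_mv_eq_of_riccati (hP : P.IsHermitian)
    (hARE : P * A + Aᵀ * P - P * B * Bᵀ * P + Q = 0) (z : EuclideanSpace ℝ (Fin n)) :
    2 * ⟪mv P z, mv A z⟫ = ‖mv (Bᵀ * P) z‖ ^ 2 - ⟪z, mv Q z⟫ := by
  have hPt : Pᵀ = P := (isHermitian_iff_isSymm.mp hP).eq
  have hPA : ⟪mv P z, mv A z⟫ = ⟪z, mv (P * A) z⟫ := by rw [inner_mv_left, hPt, mv_mul]
  have hAP : ⟪mv P z, mv A z⟫ = ⟪z, mv (Aᵀ * P) z⟫ := by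
    rw [real_inner_comm, inner_mv_left, mv_mul]
  have hPBBP : ⟪z, mv (P * B * Bᵀ * P) z⟫ = ‖mv (Bᵀ * P) z‖ ^ 2 := by
    rw [Matrix.mul_assoc (P * B), mv_mul, ← transpose_transpose (P * B), ← inner_mv_left,
      transpose_mul, hPt, real_inner_self_eq_norm_sq]
  have hz : ⟪z, mv (P * A + Aᵀ * P - P * B * Bᵀ * P + Q) z⟫ = 0 := by
    rw [hARE]; simp [mv]
  rw [mv_add, mv_sub, mv_add, inner_add_right, inner_sub_right, inner_add_right] at hz
  linarith

lemma two_inner_closedLoop_le {K : Matrix (Fin p) (Fin n) ℝ} (hP : P.IsHermitian)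
    (hARE : P * A + Aᵀ * P - P * B * Bᵀ * P + Q = 0) (hK : K = -(Bᵀ * P))
    (z : EuclideanSpace ℝ (Fin n)) (Δ : EuclideanSpace ℝ (Fin p)) {c : ℝ} (hΔ : ‖Δ‖ ≤ c) :
    2 * ⟪mv P z, mv (A + B * K) z + mv B Δ + c • mv B (sgn (mv K z))⟫ ≤ -⟪z, mv Q z⟫ := by
  set w := mv K z
  have hw : mv (Bᵀ * P) z = -w := by simp only [w, hK, mv_neg, neg_neg]
  have hPB : ∀ u, ⟪mv P z, mv B u⟫ = -⟪w, u⟫ := fun u => by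
    rw [real_inner_comm, inner_mv_left, ← mv_mul, hw, inner_neg_right, real_inner_comm]
  have hA := two_inner_mv_eq_of_riccati hP hARE z
  rw [hw, norm_neg] at hA
  have hwΔ : -(‖w‖ * c) ≤ ⟪w, Δ⟫ := calc
    -(‖w‖ * c) ≤ -(‖w‖ * ‖Δ‖) := by gcongr
    _ ≤ ⟪w, Δ⟫ := neg_le_of_abs_le (abs_real_inner_le_norm w Δ)
  rw [mv_add, mv_mul, inner_add_right, inner_add_right, inner_add_right, inner_smul_right,
    hPB, hPB, hPB, inner_self_sgn, real_inner_self_eq_norm_sq]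
  linarith [sq_nonneg ‖w‖]

end Riccati

lemma HasDerivAt.dotProduct_mulVec_self {n : ℕ} {P : Matrix (Fin n) (Fin n) ℝ}
    (hP : P.IsHermitian) {e : ℝ → EuclideanSpace ℝ (Fin n)} {e' : EuclideanSpace ℝ (Fin n)}
    {t : ℝ} (he : HasDerivAt e e' t) :
    HasDerivAt (fun τ => (e τ).ofLp ⬝ᵥ P *ᵥ (e τ).ofLp) (2 * ⟪mv P (e t), e'⟫) t := by
  have hPt : Pᵀ = P := (isHermitian_iff_isSymm.mp hP).eq
  have hPe : HasDerivAt (fun τ => mv P (e τ)) (mv P e') t :=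
    (Matrix.toEuclideanCLM (𝕜 := ℝ) P).hasFDerivAt.comp_hasDerivAt t he
  simp only [← inner_mv_eq_dotProduct]
  refine (he.inner ℝ hPe).congr_deriv ?_
  rw [real_inner_comm (mv P (e t)) e', inner_mv_left, hPt]; ring

lemma le_mul_exp_of_hasDerivAt_le {V : ℝ → ℝ} {η : ℝ}
    (hV : ∀ t, 0 ≤ t → ∃ V', HasDerivAt V V' t ∧ V' ≤ -η * V t)
    {t : ℝ} (ht : 0 ≤ t) : V t ≤ V 0 * Real.exp (-η * t) := by
  choose! V' hV hV' using hV
  have := le_gronwallBound_of_liminf_deriv_right_le (K := -η) (ε := 0)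
    (fun s hs => (hV s hs.1).continuousAt.continuousWithinAt)
    (fun s hs _ hr => (hV s hs.1).hasDerivWithinAt.liminf_right_slope_le hr)
    le_rfl (fun s hs => by simpa using hV' s hs.1) t ⟨ht, le_rfl⟩
  simpa [gronwallBound_ε0] using this

lemma exists_norm_le_mul_exp_of_mul_sq_le {E : Type*} [SeminormedAddCommGroup E]
    {e : ℝ → E} {a c η : ℝ} (hc : 0 < c) (hη : 0 < η)
    (he : ∀ t, 0 ≤ t → c * ‖e t‖ ^ 2 ≤ a * Real.exp (-η * t)) :
    ∃ C κ : ℝ, 0 < κ ∧ ∀ t, 0 ≤ t → ‖e t‖ ≤ C * Real.exp (-κ * t) := by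
  refine ⟨√(a / c), η / 2, half_pos hη, fun t ht => ?_⟩
  rw [show -(η / 2) * t = -η * t / 2 by ring, Real.exp_half,
    ← Real.sqrt_mul' _ (Real.exp_pos _).le]
  refine Real.le_sqrt_of_sq_le ?_
  rw [div_mul_eq_mul_div, le_div_iff₀ hc, mul_comm]
  exact he t ht

theorem tracking_error_exponential_decay_general
    (n p : ℕ)
    (A : Matrix (Fin n) (Fin n) ℝ) (B : Matrix (Fin n) (Fin p) ℝ)
    (γ : ℝ) (hγ : 0 < γ)
    (f : EuclideanSpace ℝ (Fin n) → ℝ → EuclideanSpace ℝ (Fin p))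
    (hf : ∀ θ₁ θ₂ : EuclideanSpace ℝ (Fin n), ∀ t : ℝ, 0 ≤ t →
      ‖f θ₁ t - f θ₂ t‖ ≤ γ * ‖θ₁ - θ₂‖)
    (P₂ Q₂ : Matrix (Fin n) (Fin n) ℝ) (hP₂ : P₂.PosDef) (hQ₂ : Q₂.PosDef)
    (hARE₂ : P₂ * A + Aᵀ * P₂ - P₂ * B * Bᵀ * P₂ + Q₂ = 0)
    (K₂ : Matrix (Fin p) (Fin n) ℝ) (hK₂ : K₂ = -(Bᵀ * P₂))
    (μ ν : ℝ) (hμ : γ ≤ μ) (hν : 0 < ν)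
    (lminQ₂ lmaxP₂ η₂ : ℝ)
    (hlminQ₂ : IsLeast {t : ℝ | ∃ v : Fin n → ℝ, v ≠ 0 ∧ Q₂.mulVec v = t • v} lminQ₂)
    (hlmaxP₂ : IsGreatest {t : ℝ | ∃ v : Fin n → ℝ, v ≠ 0 ∧ P₂.mulVec v = t • v} lmaxP₂)
    (hη₂ : η₂ = lminQ₂ / lmaxP₂)
    (x r pf : ℝ → EuclideanSpace ℝ (Fin n))
    (hdyn : ∀ t : ℝ, 0 ≤ t →
      HasDerivAt (fun τ => x τ - pf τ)
        (mv (A + B * K₂) (x t - pf t) + mv B (f (x t) t - f (r t) t) +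
          (μ * (‖x t - r t‖ + ν)) • mv B (sgn (mv K₂ (x t - pf t)))) t) :
    (∀ t : ℝ, 0 ≤ t →
      (x t - pf t) ⬝ᵥ P₂.mulVec (x t - pf t) ≤
        ((x 0 - pf 0) ⬝ᵥ P₂.mulVec (x 0 - pf 0)) * Real.exp (-η₂ * t)) ∧
    (∃ C c : ℝ, 0 < c ∧ ∀ t : ℝ, 0 ≤ t → ‖x t - pf t‖ ≤ C * Real.exp (-c * t)) := by
  have hη : 0 < η₂ := hη₂ ▸ div_pos (hQ₂.pos_of_mem_eigenvalueSet hlminQ₂.1)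
    (hP₂.pos_of_mem_eigenvalueSet hlmaxP₂.1)
  have hfr : ∀ t, 0 ≤ t → ‖f (x t) t - f (r t) t‖ ≤ μ * (‖x t - r t‖ + ν) := fun t ht => calc
    _ ≤ γ * ‖x t - r t‖ := hf (x t) (r t) t ht
    _ ≤ μ * (‖x t - r t‖ + ν) := by gcongr <;> linarith
  set V := fun τ => (x τ - pf τ).ofLp ⬝ᵥ P₂ *ᵥ (x τ - pf τ).ofLp
  have hdecay : ∀ t, 0 ≤ t → V t ≤ V 0 * Real.exp (-η₂ * t) := by
    refine fun t ht => le_mul_exp_of_hasDerivAt_le (fun s hs => ?_) ht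
    refine ⟨_, (hdyn s hs).dotProduct_mulVec_self hP₂.1, ?_⟩
    have hQP := hη₂ ▸ div_mul_dotProduct_mulVec_le hP₂ hQ₂ hlminQ₂ hlmaxP₂ (x s - pf s)
    have hV' := two_inner_closedLoop_le hP₂.1 hARE₂ hK₂ (x s - pf s) _ (hfr s hs)
    rw [inner_mv_eq_dotProduct] at hV'
    linarith
  obtain ⟨c, hc, hPc⟩ := hP₂.exists_pos_mul_norm_sq_le
  exact ⟨hdecay, exists_norm_le_mul_exp_of_mul_sq_le hc hη
    fun t ht => (hPc _).trans (hdecay t ht)⟩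

/-- Under the Lipschitz-type condition on `f`, with `P₂, Q₂` symmetric
positive definite solving the Riccati equation, `K₂ = −BᵀP₂`, `μ ≥ γ`, `ν > 0`, every
tracking error `x̃ = x − p` obeying
`ẋ̃ = (A+BK₂)x̃ + B(f(x,t) − f(r,t)) + μφ B h(K₂x̃)` with `φ = ‖x − r‖ + ν` satisfies
`V(t) = x̃(t)ᵀP₂x̃(t) ≤ V(0) e^{−η₂ t}` with `η₂ = λ_min(Q₂)/λ_max(P₂)`; in particular
`x̃(t) → 0` exponentially. -/
theorem tracking_error_exponential_decay
    (n p : ℕ)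
    (A : Matrix (Fin n) (Fin n) ℝ) (B : Matrix (Fin n) (Fin p) ℝ)
    (γ : ℝ) (hγ : 0 < γ)
    (f : EuclideanSpace ℝ (Fin n) → ℝ → EuclideanSpace ℝ (Fin p))
    (hf : ∀ θ₁ θ₂ : EuclideanSpace ℝ (Fin n), ∀ t : ℝ, 0 ≤ t →
      ‖f θ₁ t - f θ₂ t‖ ≤ γ * ‖θ₁ - θ₂‖)
    (hf0 : ∀ t : ℝ, 0 ≤ t → f 0 t = 0)
    (P₂ Q₂ : Matrix (Fin n) (Fin n) ℝ) (hP₂ : P₂.PosDef) (hQ₂ : Q₂.PosDef)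
    (hARE₂ : P₂ * A + Aᵀ * P₂ - P₂ * B * Bᵀ * P₂ + Q₂ = 0)
    (K₂ : Matrix (Fin p) (Fin n) ℝ) (hK₂ : K₂ = -(Bᵀ * P₂))
    (μ ν : ℝ) (hμ : γ ≤ μ) (hν : 0 < ν)
    (lminQ₂ lmaxP₂ η₂ : ℝ)
    (hlminQ₂ : IsLeast {t : ℝ | ∃ v : Fin n → ℝ, v ≠ 0 ∧ Q₂.mulVec v = t • v} lminQ₂)
    (hlmaxP₂ : IsGreatest {t : ℝ | ∃ v : Fin n → ℝ, v ≠ 0 ∧ P₂.mulVec v = t • v} lmaxP₂)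
    (hη₂ : η₂ = lminQ₂ / lmaxP₂)
    (x r pf : ℝ → EuclideanSpace ℝ (Fin n))
    (hdyn : ∀ t : ℝ, 0 ≤ t →
      HasDerivAt (fun τ => x τ - pf τ)
        (mv (A + B * K₂) (x t - pf t) + mv B (f (x t) t - f (r t) t) +
          (μ * (‖x t - r t‖ + ν)) • mv B (sgn (mv K₂ (x t - pf t)))) t) :
    (∀ t : ℝ, 0 ≤ t →
      (x t - pf t) ⬝ᵥ P₂.mulVec (x t - pf t) ≤
        ((x 0 - pf 0) ⬝ᵥ P₂.mulVec (x 0 - pf 0)) * Real.exp (-η₂ * t)) ∧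
    (∃ C c : ℝ, 0 < c ∧ ∀ t : ℝ, 0 ≤ t → ‖x t - pf t‖ ≤ C * Real.exp (-c * t)) :=
  tracking_error_exponential_decay_general n p A B γ hγ f hf P₂ Q₂ hP₂ hQ₂ hARE₂ K₂ hK₂ μ ν hμ hν
    lminQ₂ lmaxP₂ η₂ hlminQ₂ hlmaxP₂ hη₂ x r pf hdyn
end
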